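/- arXiv:1405.6964 — 5 statements merged into one kernel-verified Lean document; each statement's English description precedes it below -/
import Mathlib

section
/- Let $\{Y_i\}_{i=0}^\infty$ be a sequence of non-negative real numbers satisfying $Y_{i+1} \le A B^i Y_i^{1+\mu}$ for all $i \ge 0$, where $A > 0$, $B > 1$, $\mu > 0$. If $Y_0 \le A^{-1/\mu} B^{-1/\mu^2}$, then $\lim_{i \to \infty} Y_i = 0$. -/
/-- Fast geometric convergence: if `Y 0 ≤ A^(-1/μ) * B^(-1/μ²)` then `Y i → 0`. -/
theorem stmt1 (Y : ℕ → ℝ) (A B μ : ℝ) (hA : 0 < A) (hB : 1 < B) (hμ : 0 < μ)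
    (hY : ∀ i, 0 ≤ Y i)
    (hrec : ∀ i, Y (i + 1) ≤ A * B ^ i * Y i ^ (1 + μ))
    (h0 : Y 0 ≤ A ^ (-1 / μ) * B ^ (-1 / μ ^ 2)) :
    Filter.Tendsto Y Filter.atTop (nhds 0) := by
  have hB0 : (0:ℝ) < B := lt_trans one_pos hB
  have key : ∀ i : ℕ, Y i ≤ A ^ (-1 / μ) * B ^ (-1 / μ ^ 2 - (i : ℝ) / μ) := by
    intro i
    induction i with
    | zero => simpa using h0
    | succ n ih =>
      have h1 : Y (n + 1) ≤ A * B ^ n * Y n ^ (1 + μ) := hrec n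
      have h2 : Y n ^ (1 + μ) ≤ (A ^ (-1 / μ) * B ^ (-1 / μ ^ 2 - (n : ℝ) / μ)) ^ (1 + μ) :=
        Real.rpow_le_rpow (hY n) ih (by linarith)
      have h3 : Y (n + 1) ≤ A * B ^ n * (A ^ (-1 / μ) * B ^ (-1 / μ ^ 2 - (n : ℝ) / μ)) ^ (1 + μ) := by
        calc Y (n + 1) ≤ A * B ^ n * Y n ^ (1 + μ) := h1
          _ ≤ _ := by
            apply mul_le_mul_of_nonneg_left h2
            positivity
      refine h3.trans_eq ?_
      rw [Real.mul_rpow (by positivity) (by positivity),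
        ← Real.rpow_natCast B n, ← Real.rpow_mul hA.le, ← Real.rpow_mul hB0.le]
      rw [show A * B ^ (n:ℝ) * (A ^ (-1 / μ * (1 + μ)) * B ^ ((-1 / μ ^ 2 - (n : ℝ) / μ) * (1 + μ)))
          = (A ^ (1:ℝ) * A ^ (-1 / μ * (1 + μ))) * (B ^ (n:ℝ) * B ^ ((-1 / μ ^ 2 - (n : ℝ) / μ) * (1 + μ))) by
        rw [Real.rpow_one]; ring]
      rw [← Real.rpow_add hA, ← Real.rpow_add hB0]
      congr 1
      · congr 1; first | (field_simp; ring) | field_simp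
      · congr 1; push_cast; first | (field_simp; ring) | field_simp
  have hr0 : (0:ℝ) < B ^ (-1 / μ) := Real.rpow_pos_of_pos hB0 _
  have hr1 : B ^ (-1 / μ) < 1 :=
    Real.rpow_lt_one_of_one_lt_of_neg hB (div_neg_of_neg_of_pos (by norm_num) hμ)
  have hub : ∀ i : ℕ, Y i ≤ (A ^ (-1 / μ) * B ^ (-1 / μ ^ 2)) * (B ^ (-1 / μ)) ^ i := by
    intro i
    refine (key i).trans_eq ?_
    rw [← Real.rpow_natCast (B ^ (-1/μ)) i, ← Real.rpow_mul hB0.le,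
      mul_assoc, ← Real.rpow_add hB0]
    congr 2
    ring
  have htend : Filter.Tendsto (fun i : ℕ => (A ^ (-1 / μ) * B ^ (-1 / μ ^ 2)) * (B ^ (-1 / μ)) ^ i)
      Filter.atTop (nhds 0) := by
    rw [show (0:ℝ) = (A ^ (-1 / μ) * B ^ (-1 / μ ^ 2)) * 0 by ring]
    exact (tendsto_pow_atTop_nhds_zero_of_lt_one hr0.le hr1).const_mul _
  exact squeeze_zero hY hub htend
end

section
/- Let $\{Y_i\}_{i=0}^\infty$ be a sequence of non-negative real numbers satisfying $Y_{i+1} \le \sum_{k=1}^m A_k B_k^i Y_i^{1+\mu_k}$ for all $i \ge 0$, where $A_k > 0$, $B_k > 1$, $\mu_k > 0$ for each $k$. Let $B = \max_k B_k$ and $\mu = \min_k \mu_k$. If $\sum_{k=1}^m A_k Y_0^{\mu_k} \le B^{-1/\mu}$, then $\lim_{i \to \infty} Y_i = 0$. -/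
/-- Multi-term fast geometric convergence: if
`∑ k, A k * Y 0 ^ μ k ≤ Bmax ^ (-1/μmin)` then `Y i → 0`. -/
theorem stmt2 (m : ℕ) (hm : 1 ≤ m) (A B μ : Fin m → ℝ) (Bmax μmin : ℝ)
    (hA : ∀ k, 0 < A k) (hB : ∀ k, 1 < B k) (hμ : ∀ k, 0 < μ k)
    (hBmax : IsGreatest (Set.range B) Bmax)
    (hμmin : IsLeast (Set.range μ) μmin)
    (Y : ℕ → ℝ) (hY : ∀ i, 0 ≤ Y i)
    (hrec : ∀ i, Y (i + 1) ≤ ∑ k, A k * (B k) ^ i * Y i ^ (1 + μ k))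
    (h0 : ∑ k, A k * Y 0 ^ (μ k) ≤ Bmax ^ (-1 / μmin)) :
    Filter.Tendsto Y Filter.atTop (nhds 0) := by
  obtain ⟨kB, hkB⟩ := hBmax.1
  obtain ⟨kμ, hkμ⟩ := hμmin.1
  have hBmax1 : 1 < Bmax := hkB ▸ hB kB
  have hμmin0 : 0 < μmin := hkμ ▸ hμ kμ
  have hBmax0 : (0:ℝ) ≤ Bmax := by linarith
  set θ := Bmax ^ (-1/μmin) with hθdef
  have hθpos : 0 < θ := Real.rpow_pos_of_pos (by linarith) _
  have hθlt1 : θ < 1 :=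
    Real.rpow_lt_one_of_one_lt_of_neg hBmax1 (div_neg_of_neg_of_pos (by norm_num) hμmin0)
  have e3 : θ ^ μmin = Bmax⁻¹ := by
    rw [hθdef, ← Real.rpow_mul hBmax0, div_mul_cancel₀ _ hμmin0.ne', Real.rpow_neg_one]
  have hc : ∀ k, Bmax * θ ^ (μ k) ≤ 1 := by
    intro k
    have h1 : θ ^ (μ k) ≤ θ ^ μmin :=
      Real.rpow_le_rpow_of_exponent_ge hθpos hθlt1.le (hμmin.2 ⟨k, rfl⟩)
    calc Bmax * θ ^ (μ k) ≤ Bmax * θ ^ μmin := by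
          exact mul_le_mul_of_nonneg_left h1 hBmax0
      _ = 1 := by rw [e3, mul_inv_cancel₀ (by linarith)]
  have key : ∀ i, Y i ≤ Y 0 * θ ^ i := by
    intro i
    induction i with
    | zero => simp
    | succ i ih =>
      have hθi : (0:ℝ) < θ ^ i := pow_pos hθpos i
      calc Y (i+1) ≤ ∑ k, A k * B k ^ i * Y i ^ (1 + μ k) := hrec i
        _ ≤ ∑ k, A k * Y 0 ^ (μ k) * (Y 0 * θ ^ i) := by
            apply Finset.sum_le_sum
            intro k _
            have h1μ : (0:ℝ) < 1 + μ k := by linarith [hμ k]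
            have e1 : Y 0 ^ (1 + μ k) = Y 0 * Y 0 ^ (μ k) := by
              rw [Real.rpow_add' (hY 0) h1μ.ne', Real.rpow_one]
            have e2 : (θ ^ i) ^ (1 + μ k) = θ ^ i * (θ ^ (μ k)) ^ i := by
              rw [Real.rpow_add hθi, Real.rpow_one]
              congr 1
              rw [← Real.rpow_natCast θ i, ← Real.rpow_mul hθpos.le, mul_comm,
                Real.rpow_mul hθpos.le, Real.rpow_natCast]
            have hBk0 : (0:ℝ) ≤ B k := by linarith [hB k]
            calc A k * B k ^ i * Y i ^ (1 + μ k)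
                ≤ A k * Bmax ^ i * (Y 0 * θ ^ i) ^ (1 + μ k) := by
                  gcongr <;> first
                    | exact ih
                    | exact hBmax.2 ⟨k, rfl⟩
                    | exact hY i
                    | exact Real.rpow_nonneg (hY i) _
                    | exact (hA k).le
                    | exact mul_nonneg (hA k).le (pow_nonneg hBmax0 i)
                    | exact mul_nonneg (hY 0) hθi.le
                    | exact mul_nonneg (hA k).le (Real.rpow_nonneg (hY 0) _)
                    | positivity
              _ = A k * Y 0 ^ (μ k) * ((Bmax * θ ^ (μ k)) ^ i) * (Y 0 * θ ^ i) := by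
                  rw [Real.mul_rpow (hY 0) hθi.le, e1, e2, mul_pow]; ring
              _ ≤ A k * Y 0 ^ (μ k) * 1 * (Y 0 * θ ^ i) := by
                  gcongr <;> first
                    | exact pow_le_one₀
                        (mul_nonneg hBmax0 (Real.rpow_nonneg hθpos.le _)) (hc k)
                    | exact Real.rpow_nonneg (hY 0) _
                    | exact (hA k).le
                    | exact mul_nonneg (hA k).le (pow_nonneg hBmax0 i)
                    | exact mul_nonneg (hY 0) hθi.le
                    | exact mul_nonneg (hA k).le (Real.rpow_nonneg (hY 0) _)
                    | positivity
              _ = A k * Y 0 ^ (μ k) * (Y 0 * θ ^ i) := by ring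
        _ = (∑ k, A k * Y 0 ^ (μ k)) * (Y 0 * θ ^ i) := by rw [Finset.sum_mul]
        _ ≤ θ * (Y 0 * θ ^ i) := by
            apply mul_le_mul_of_nonneg_right h0 (mul_nonneg (hY 0) hθi.le)
        _ = Y 0 * θ ^ (i+1) := by ring
  have hlim : Filter.Tendsto (fun i => Y 0 * θ ^ i) Filter.atTop (nhds 0) := by
    simpa using (tendsto_pow_atTop_nhds_zero_of_lt_one hθpos.le hθlt1).const_mul (Y 0)
  exact squeeze_zero hY key hlim
end

section
/- Let $\{Y_i\}_{i=0}^\infty$ be a sequence of non-negative real numbers satisfying $Y_{i+1} \le \sum_{k=1}^m A_k B_k^i Y_i^{1+\mu_k}$ for all $i \ge 0$, where $A_k > 0$, $B_k > 1$, $\mu_k > 0$. Let $B = \max_k B_k$ and $\mu = \min_k \mu_k$. If $Y_0 \le \min_{1 \le k \le m} (m^{-1} A_k^{-1} B^{-1/\mu})^{1/\mu_k}$, then $\lim_{i \to \infty} Y_i = 0$. -/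
/-- Multi-term fast geometric convergence, second smallness criterion:
if `Y 0 ≤ min_k (m⁻¹ * (A k)⁻¹ * Bmax^(-1/μmin))^(1/μ k)` then `Y i → 0`. -/
theorem stmt3 (m : ℕ) (hm : 1 ≤ m) (A B μ : Fin m → ℝ) (Bmax μmin : ℝ)
    (hA : ∀ k, 0 < A k) (hB : ∀ k, 1 < B k) (hμ : ∀ k, 0 < μ k)
    (hBmax : IsGreatest (Set.range B) Bmax)
    (hμmin : IsLeast (Set.range μ) μmin)
    (Y : ℕ → ℝ) (hY : ∀ i, 0 ≤ Y i)
    (hrec : ∀ i, Y (i + 1) ≤ ∑ k, A k * (B k) ^ i * Y i ^ (1 + μ k))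
    (h0 : ∀ k, Y 0 ≤ ((m : ℝ)⁻¹ * (A k)⁻¹ * Bmax ^ (-1 / μmin)) ^ (1 / μ k)) :
    Filter.Tendsto Y Filter.atTop (nhds 0) := by
  obtain ⟨⟨kB, hkB⟩, hBle⟩ := hBmax
  obtain ⟨⟨kμ, hkμ⟩, hμle⟩ := hμmin
  have hBmax1 : 1 < Bmax := hkB ▸ hB kB
  have hBmax0 : 0 < Bmax := by linarith
  have hμmin0 : 0 < μmin := hkμ ▸ hμ kμ
  set θ := Bmax ^ (-1/μmin) with hθdef
  have hθ0 : 0 < θ := Real.rpow_pos_of_pos hBmax0 _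
  have hθ1 : θ < 1 :=
    Real.rpow_lt_one_of_one_lt_of_neg hBmax1 (div_neg_of_neg_of_pos (by norm_num) hμmin0)
  have key : ∀ i, Y i ≤ Y 0 * θ ^ i := by
    intro i
    induction i with
    | zero => simp
    | succ i ih =>
      have e0 : 0 ≤ Y 0 * θ ^ i := mul_nonneg (hY 0) (pow_nonneg hθ0.le i)
      have h1 : ∀ k : Fin m, A k * B k ^ i * Y i ^ (1 + μ k)
          ≤ (m : ℝ)⁻¹ * (Y 0 * θ ^ (i + 1)) := by
        intro k
        have hμk := hμ k
        have hAk := hA k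
        have hBk := hB k
        have h2 : Y i ^ (1 + μ k) ≤ (Y 0 * θ ^ i) ^ (1 + μ k) :=
          Real.rpow_le_rpow (hY i) ih (by linarith)
        have h3 : (Y 0 * θ ^ i) ^ (1 + μ k)
            = (Y 0 * Y 0 ^ (μ k)) * (θ ^ i * θ ^ ((i : ℝ) * μ k)) := by
          rw [Real.mul_rpow (hY 0) (pow_nonneg hθ0.le i),
            Real.rpow_add' (hY 0) (by positivity), Real.rpow_one,
            ← Real.rpow_natCast θ i, ← Real.rpow_mul hθ0.le, ← Real.rpow_add hθ0,
            show (i:ℝ) * (1 + μ k) = (i:ℝ) + (i:ℝ) * μ k from by ring]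
        -- bound Y 0 ^ μ k
        have hc0 : (0:ℝ) ≤ (m : ℝ)⁻¹ * (A k)⁻¹ * θ := by positivity
        have h6 : Y 0 ^ (μ k) ≤ (m : ℝ)⁻¹ * (A k)⁻¹ * θ := by
          have := Real.rpow_le_rpow (hY 0) (h0 k) hμk.le
          rwa [← Real.rpow_mul hc0, one_div, inv_mul_cancel₀ hμk.ne',
            Real.rpow_one] at this
        -- bound B k ^ i * θ ^ (i * μ k)
        have hθμ : θ ^ (μ k) ≤ Bmax⁻¹ := by
          rw [hθdef, ← Real.rpow_mul hBmax0.le, ← Real.rpow_neg_one Bmax]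
          apply Real.rpow_le_rpow_of_exponent_le hBmax1.le
          have h1k : 1 ≤ μ k / μmin := (one_le_div hμmin0).2 (hμle ⟨k, rfl⟩)
          have : -1 / μmin * μ k = -(μ k / μmin) := by ring
          rw [this]; linarith
        have hBθ : B k * θ ^ (μ k) ≤ 1 := by
          have := mul_le_mul (hBle ⟨k, rfl⟩) hθμ (Real.rpow_nonneg hθ0.le _) hBmax0.le
          rwa [mul_inv_cancel₀ hBmax0.ne'] at this
        have h7 : B k ^ i * θ ^ ((i : ℝ) * μ k) ≤ 1 := by
          have heq : θ ^ ((i : ℝ) * μ k) = (θ ^ (μ k)) ^ i := by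
            rw [mul_comm, Real.rpow_mul hθ0.le, Real.rpow_natCast]
          rw [heq, ← mul_pow]
          exact pow_le_one₀ (mul_nonneg (by linarith) (Real.rpow_nonneg hθ0.le _)) hBθ
        have hAp : A k * Y 0 ^ (μ k) ≤ (m : ℝ)⁻¹ * θ := by
          have := mul_le_mul_of_nonneg_left h6 hAk.le
          calc A k * Y 0 ^ (μ k) ≤ A k * ((m : ℝ)⁻¹ * (A k)⁻¹ * θ) := this
            _ = (m : ℝ)⁻¹ * θ := by field_simp
        calc A k * B k ^ i * Y i ^ (1 + μ k)
            ≤ A k * B k ^ i * ((Y 0 * θ ^ i) ^ (1 + μ k)) := by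
              exact mul_le_mul_of_nonneg_left h2 (by positivity)
          _ = (A k * Y 0 ^ (μ k)) * (B k ^ i * θ ^ ((i : ℝ) * μ k)) * (Y 0 * θ ^ i) := by
              rw [h3]; ring
          _ ≤ ((m : ℝ)⁻¹ * θ) * 1 * (Y 0 * θ ^ i) := by
              apply mul_le_mul_of_nonneg_right _ e0
              exact mul_le_mul hAp h7
                (mul_nonneg (pow_nonneg (by linarith) i) (Real.rpow_nonneg hθ0.le _))
                (by positivity)
          _ = (m : ℝ)⁻¹ * (Y 0 * θ ^ (i + 1)) := by ring
      calc Y (i + 1) ≤ ∑ k, A k * (B k) ^ i * Y i ^ (1 + μ k) := hrec i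
        _ ≤ ∑ _k : Fin m, (m : ℝ)⁻¹ * (Y 0 * θ ^ (i + 1)) :=
            Finset.sum_le_sum fun k _ => h1 k
        _ = Y 0 * θ ^ (i + 1) := by
            rw [Finset.sum_const, Finset.card_univ, Fintype.card_fin, nsmul_eq_mul]
            have hm0 : (m : ℝ) ≠ 0 := Nat.cast_ne_zero.2 (by omega)
            field_simp
  have hlim : Filter.Tendsto (fun i => Y 0 * θ ^ i) Filter.atTop (nhds 0) := by
    have := (tendsto_pow_atTop_nhds_zero_of_lt_one hθ0.le hθ1).const_mul (Y 0)
    simpa using this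
  exact squeeze_zero hY key hlim
end

section
/- Let $\{Y_i\}$ be a sequence of non-negative reals, $A_1, A_2 > 0$, $B > 1$, $0 < \mu_1 \le \mu_2$, with $Y_{i+1} \le B^i (A_1 Y_i^{1+\mu_1} + A_2 Y_i^{1+\mu_2})$ for all $i \ge 0$. Suppose $D > 0$ satisfies $Y_0 \le D (A_1 D^{\mu_1} + A_2 D^{\mu_2})^{-1/\mu_1} B^{-1/\mu_1^2} \le D$. Then $Y_i \le D$ for all $i \ge 0$, and $\lim_{i \to \infty} Y_i = 0$. -/
/-!
Put `K = A₁ D^μ₁ + A₂ D^μ₂`, `E = D K^(-1/μ₁) B^(-1/μ₁²)` and `r = B^(-1/μ₁)`. While `Y i ≤ D`, the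
factor `Y i ^ (μ₂ - μ₁)` is at most `D ^ (μ₂ - μ₁)`, so the two-term recursion collapses to the
one-term recursion `Y (i+1) ≤ (K / D^μ₁) B^i Y i ^ (1+μ₁)` of De Giorgi type. The constant `E` is
exactly the one with `(K / D^μ₁) E^μ₁ = r`, and then induction gives `Y i ≤ E r^i`: the factor
`B^i` is absorbed by `(r^i)^μ₁ = B^(-i)`. Since `E ≤ D` the barrier `Y i ≤ D` is never left, and
`r < 1` forces `Y i → 0`.
-/

open Real Filter Topology

theorem two_term_rpow_le_of_le {y D A₁ A₂ μ₁ μ₂ : ℝ} (hy : 0 ≤ y) (hyD : y ≤ D) (hD : 0 < D)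
    (hA₂ : 0 ≤ A₂) (hμ₁ : 0 ≤ μ₁) (hμ : μ₁ ≤ μ₂) :
    A₁ * y ^ (1 + μ₁) + A₂ * y ^ (1 + μ₂) ≤ (A₁ * D ^ μ₁ + A₂ * D ^ μ₂) / D ^ μ₁ * y ^ (1 + μ₁) := by
  have hcoef : (A₁ * D ^ μ₁ + A₂ * D ^ μ₂) / D ^ μ₁ = A₁ + A₂ * D ^ (μ₂ - μ₁) := by
    rw [rpow_sub hD]
    field_simp
  have hsplit : y ^ (1 + μ₂) = y ^ (1 + μ₁) * y ^ (μ₂ - μ₁) := by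
    rw [← rpow_add' hy (by linarith)]
    ring_nf
  have hpow : y ^ (μ₂ - μ₁) ≤ D ^ (μ₂ - μ₁) := rpow_le_rpow hy hyD (by linarith)
  rw [hcoef, hsplit]
  nlinarith [mul_le_mul_of_nonneg_left hpow (mul_nonneg hA₂ (rpow_nonneg hy (1 + μ₁)))]

theorem mul_rpow_barrier_eq {D K B μ : ℝ} (hD : 0 < D) (hK : 0 < K) (hB : 0 ≤ B) (hμ : μ ≠ 0) :
    K / D ^ μ * (D * K ^ (-1 / μ) * B ^ (-1 / μ ^ 2)) ^ μ = B ^ (-1 / μ) := by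
  rw [mul_rpow (by positivity) (by positivity), mul_rpow hD.le (by positivity),
    ← rpow_mul hK.le, ← rpow_mul hB, div_mul_cancel₀ _ hμ, rpow_neg_one]
  have : -1 / μ ^ 2 * μ = -1 / μ := by field_simp
  rw [this]
  field_simp

theorem le_mul_geom_of_rpow_recursion {Y : ℕ → ℝ} {B C E μ : ℝ} (hB : 1 ≤ B) (hμ : 0 < μ)
    (hC : 0 ≤ C) (hY : ∀ i, 0 ≤ Y i) (hCE : C * E ^ μ ≤ B ^ (-1 / μ)) (h0 : Y 0 ≤ E)
    (hrec : ∀ i, Y i ≤ E → Y (i + 1) ≤ C * B ^ i * Y i ^ (1 + μ)) (i : ℕ) :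
    Y i ≤ E * (B ^ (-1 / μ)) ^ i := by
  set r := B ^ (-1 / μ)
  have hE : 0 ≤ E := (hY 0).trans h0
  have hr0 : 0 ≤ r := by positivity
  have hr1 : r ≤ 1 :=
    rpow_le_one_of_one_le_of_nonpos hB (div_nonpos_of_nonpos_of_nonneg (by norm_num) hμ.le)
  have hrμ : r ^ μ = B⁻¹ := by
    rw [← rpow_mul (by positivity), div_mul_cancel₀ _ hμ.ne', rpow_neg_one]
  induction i with
  | zero => simpa using h0
  | succ i ih =>
    have hEr : 0 ≤ E * r ^ i := by positivity
    calc Y (i + 1) ≤ C * B ^ i * Y i ^ (1 + μ) :=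
          hrec i (ih.trans (mul_le_of_le_one_right hE (pow_le_one₀ hr0 hr1)))
      _ ≤ C * B ^ i * (E * r ^ i) ^ (1 + μ) := by gcongr; exact hY i
      _ = E * r ^ i * (C * E ^ μ) * (B ^ i * (r ^ μ) ^ i) := by
          rw [rpow_add' hEr (by positivity), rpow_one, mul_rpow hE (by positivity),
            rpow_pow_comm hr0]
          ring
      _ ≤ E * r ^ i * r * 1 := by
          rw [hrμ, ← mul_pow, mul_inv_cancel₀ (by positivity), one_pow]
          gcongr
      _ = E * r ^ (i + 1) := by ring

/-- Two-term fast geometric convergence with an auxiliary barrier constant `D`. -/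
theorem stmt4 (Y : ℕ → ℝ) (A₁ A₂ B μ₁ μ₂ D : ℝ)
    (hA1 : 0 < A₁) (hA2 : 0 < A₂) (hB : 1 < B) (hμ1 : 0 < μ₁) (hμ12 : μ₁ ≤ μ₂)
    (hY : ∀ i, 0 ≤ Y i)
    (hrec : ∀ i, Y (i + 1) ≤ B ^ i * (A₁ * Y i ^ (1 + μ₁) + A₂ * Y i ^ (1 + μ₂)))
    (hD : 0 < D)
    (h1 : Y 0 ≤ D * (A₁ * D ^ μ₁ + A₂ * D ^ μ₂) ^ (-1 / μ₁) * B ^ (-1 / μ₁ ^ 2))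
    (h2 : D * (A₁ * D ^ μ₁ + A₂ * D ^ μ₂) ^ (-1 / μ₁) * B ^ (-1 / μ₁ ^ 2) ≤ D) :
    (∀ i, Y i ≤ D) ∧ Filter.Tendsto Y Filter.atTop (nhds 0) := by
  set K := A₁ * D ^ μ₁ + A₂ * D ^ μ₂
  set E := D * K ^ (-1 / μ₁) * B ^ (-1 / μ₁ ^ 2)
  set r := B ^ (-1 / μ₁)
  have hK : 0 < K := by positivity
  have hE : 0 ≤ E := by positivity
  have hr0 : 0 ≤ r := by positivity
  have hr1 : r < 1 := rpow_lt_one_of_one_lt_of_neg hB (div_neg_of_neg_of_pos (by norm_num) hμ1)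
  have hrec₁ : ∀ i, Y i ≤ E → Y (i + 1) ≤ K / D ^ μ₁ * B ^ i * Y i ^ (1 + μ₁) := fun i hi =>
    calc Y (i + 1) ≤ B ^ i * (A₁ * Y i ^ (1 + μ₁) + A₂ * Y i ^ (1 + μ₂)) := hrec i
      _ ≤ B ^ i * (K / D ^ μ₁ * Y i ^ (1 + μ₁)) := by
        gcongr
        exact two_term_rpow_le_of_le (hY i) (hi.trans h2) hD hA2.le hμ1.le hμ12
      _ = K / D ^ μ₁ * B ^ i * Y i ^ (1 + μ₁) := by ring
  have hbound : ∀ i, Y i ≤ E * r ^ i :=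
    le_mul_geom_of_rpow_recursion hB.le hμ1 (by positivity) hY
      (mul_rpow_barrier_eq hD hK (by positivity) hμ1.ne').le h1 hrec₁
  refine ⟨fun i => (hbound i).trans ?_, ?_⟩
  · exact (mul_le_of_le_one_right hE (pow_le_one₀ hr0 hr1.le)).trans h2
  · have hgeom : Tendsto (fun i => E * r ^ i) atTop (𝓝 0) := by
      simpa using (tendsto_pow_atTop_nhds_zero_of_lt_one hr0 hr1).const_mul E
    exact tendsto_of_tendsto_of_tendsto_of_le_of_le tendsto_const_nhds hgeom hY hbound
end

section
/- Let $n \ge 2$, $a \in (0,1)$, and let $K : [0,\infty) \to (0,\infty)$ be continuous with $K$ non-increasing and $\xi \mapsto K(\xi)\xi$ non-decreasing. If $K$ is $C^1$ on $(0,\infty)$ and satisfies $-aK(\xi) \le \xi K'(\xi) \le 0$, then for all $y, y' \in \mathbb{R}^n$, $(K(|y|)y - K(|y'|)y') \cdot (y - y') \ge (1-a) K(\max(|y|,|y'|)) |y - y'|^2$. -/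
/-- Monotonicity of the degenerate vector field `y ↦ K(|y|)y`:
`(K(|y|)y - K(|y'|)y') · (y - y') ≥ (1-a) K(max(|y|,|y'|)) |y - y'|²`. -/
theorem stmt16 (n : ℕ) (hn : 2 ≤ n) (a : ℝ) (ha : a ∈ Set.Ioo (0:ℝ) 1)
    (K K' : ℝ → ℝ)
    (hKc : ContinuousOn K (Set.Ici 0))
    (hKpos : ∀ ξ : ℝ, 0 ≤ ξ → 0 < K ξ)
    (hKd : ∀ ξ : ℝ, 0 < ξ → HasDerivAt K (K' ξ) ξ)
    (hK'c : ContinuousOn K' (Set.Ioi 0))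
    (hbound : ∀ ξ : ℝ, 0 < ξ → -a * K ξ ≤ ξ * K' ξ ∧ ξ * K' ξ ≤ 0) :
    ∀ y y' : EuclideanSpace ℝ (Fin n),
      (1 - a) * K (max ‖y‖ ‖y'‖) * ‖y - y'‖ ^ 2 ≤
        (inner ℝ (K ‖y‖ • y - K ‖y'‖ • y') (y - y') : ℝ) := by
  obtain ⟨ha0, ha1⟩ := ha
  -- K is antitone on [0, ∞)
  have hanti : AntitoneOn K (Set.Ici (0:ℝ)) := by
    apply antitoneOn_of_deriv_nonpos (convex_Ici 0) hKc
    · intro x hx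
      rw [interior_Ici] at hx
      exact (hKd x hx).differentiableAt.differentiableWithinAt
    · intro x hx
      rw [interior_Ici] at hx
      rw [(hKd x hx).deriv]
      have h2 := (hbound x hx).2
      have : x * K' x ≤ x * 0 := by linarith
      exact le_of_mul_le_mul_left this hx
  -- key scalar inequality: for 0 < s ≤ r, s * K s ≤ K r * (s + a * (r - s))
  have key : ∀ s r : ℝ, 0 < s → s ≤ r → s * K s ≤ K r * (s + a * (r - s)) := by
    intro s r hs hsr
    set h : ℝ → ℝ := fun ξ => K r * (ξ + a * (r - ξ)) - ξ * K ξ with hh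
    have hderiv : ∀ ξ : ℝ, 0 < ξ →
        HasDerivAt h (K r * (1 + a * (-1)) - (1 * K ξ + ξ * K' ξ)) ξ := by
      intro ξ hξ
      exact (((hasDerivAt_id ξ).add (((hasDerivAt_id ξ).const_sub r).const_mul a)).const_mul
        (K r)).sub ((hasDerivAt_id ξ).mul (hKd ξ hξ))
    have hconth : ContinuousOn h (Set.Icc s r) := by
      have hsub : Set.Icc s r ⊆ Set.Ici 0 := fun x hx => le_trans hs.le hx.1
      apply ContinuousOn.sub
      · exact (continuousOn_id.add ((continuousOn_const.sub continuousOn_id).const_smul a)).const_smul (K r)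
      · exact continuousOn_id.mul (hKc.mono hsub)
    have hmono : AntitoneOn h (Set.Icc s r) := by
      apply antitoneOn_of_deriv_nonpos (convex_Icc s r) hconth
      · intro x hx
        rw [interior_Icc] at hx
        exact (hderiv x (hs.trans hx.1)).differentiableAt.differentiableWithinAt
      · intro x hx
        rw [interior_Icc] at hx
        have hx0 : 0 < x := hs.trans hx.1
        rw [(hderiv x hx0).deriv]
        have h1 := (hbound x hx0).1
        have hKx : K r ≤ K x := hanti (Set.mem_Ici.2 hx0.le)
          (Set.mem_Ici.2 (le_trans hx0.le hx.2.le)) hx.2.le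
        nlinarith [hKpos x hx0.le]
    have := hmono (Set.left_mem_Icc.2 hsr) (Set.right_mem_Icc.2 hsr) hsr
    simp only [hh] at this
    nlinarith
  -- the core estimate, assuming ‖y'‖ ≤ ‖y‖
  have core : ∀ y y' : EuclideanSpace ℝ (Fin n), ‖y'‖ ≤ ‖y‖ →
      (1 - a) * K (max ‖y‖ ‖y'‖) * ‖y - y'‖ ^ 2 ≤
        (inner ℝ (K ‖y‖ • y - K ‖y'‖ • y') (y - y') : ℝ) := by
    intro y y' hsr
    set r := ‖y‖ with hr
    set s := ‖y'‖ with hs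
    have hmax : max r s = r := max_eq_left hsr
    rw [hmax]
    set P : ℝ := inner ℝ y' (y - y') with hP
    have hexp : (inner ℝ (K r • y - K s • y') (y - y') : ℝ)
        = K r * ‖y - y'‖ ^ 2 + (K r - K s) * P := by
      rw [inner_sub_left, real_inner_smul_left, real_inner_smul_left]
      have : (inner ℝ y (y - y') : ℝ) = ‖y - y'‖ ^ 2 + P := by
        rw [hP, ← real_inner_self_eq_norm_sq, ← inner_add_left]
        congr 1
        abel
      rw [this]
      ring
    rw [hexp]
    -- suffices: (K s - K r) * P ≤ a * K r * ‖y - y'‖ ^ 2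
    have hKr : 0 < K r := hKpos r (norm_nonneg y)
    have hKanti : K r ≤ K s := hanti (Set.mem_Ici.2 (norm_nonneg y'))
      (Set.mem_Ici.2 (norm_nonneg y)) hsr
    have main : (K s - K r) * P ≤ a * K r * ‖y - y'‖ ^ 2 := by
      rcases le_or_gt P 0 with hP0 | hP0
      · have h1 : (K s - K r) * P ≤ 0 := mul_nonpos_of_nonneg_of_nonpos (by linarith) hP0
        have h2 : 0 ≤ a * K r * ‖y - y'‖ ^ 2 := by positivity
        linarith
      · -- P > 0 forces y' ≠ 0, hence s > 0
        have hs0 : 0 < s := by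
          rcases eq_or_lt_of_le (norm_nonneg y') with h | h
          · exfalso
            have : y' = 0 := norm_eq_zero.1 h.symm
            rw [hP, this] at hP0
            simp at hP0
          · exact h
        -- from key: K s - K r ≤ a * K r * (r - s) / s
        have hkey := key s r hs0 hsr
        have hKs : K s - K r ≤ a * K r * (r - s) / s := by
          rw [le_div_iff₀ hs0]
          nlinarith
        -- Cauchy–Schwarz: inner ℝ y y' ≤ r * s
        have hCS : (inner ℝ y y' : ℝ) ≤ r * s := real_inner_le_norm y y'
        have hPval : P = (inner ℝ y y' : ℝ) - s ^ 2 := by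
          rw [hP, inner_sub_right, real_inner_self_eq_norm_sq, real_inner_comm, hs]
        have hnorm : ‖y - y'‖ ^ 2 = r ^ 2 - 2 * (inner ℝ y y' : ℝ) + s ^ 2 := by
          rw [← real_inner_self_eq_norm_sq, inner_sub_sub_self, real_inner_self_eq_norm_sq,
            real_inner_self_eq_norm_sq, real_inner_comm y' y]
          ring
        -- (r - s) * P ≤ s * ‖y - y'‖²
        have hgeom : (r - s) * P ≤ s * ‖y - y'‖ ^ 2 := by
          rw [hPval, hnorm]
          nlinarith [hCS, hs0, norm_nonneg y]
        calc (K s - K r) * P ≤ (a * K r * (r - s) / s) * P := by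
              apply mul_le_mul_of_nonneg_right hKs hP0.le
          _ = (a * K r / s) * ((r - s) * P) := by ring
          _ ≤ (a * K r / s) * (s * ‖y - y'‖ ^ 2) := by
              apply mul_le_mul_of_nonneg_left hgeom (by positivity)
          _ = a * K r * ‖y - y'‖ ^ 2 := by
              field_simp
        done
    nlinarith
  intro y y'
  rcases le_total ‖y'‖ ‖y‖ with h | h
  · exact core y y' h
  · have := core y' y h
    rw [max_comm, norm_sub_rev y y']
    calc (1 - a) * K (max ‖y'‖ ‖y‖) * ‖y' - y‖ ^ 2
        ≤ (inner ℝ (K ‖y'‖ • y' - K ‖y‖ • y) (y' - y) : ℝ) := this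
      _ = (inner ℝ (K ‖y‖ • y - K ‖y'‖ • y') (y - y') : ℝ) := by
          rw [show K ‖y'‖ • y' - K ‖y‖ • y = -(K ‖y‖ • y - K ‖y'‖ • y') by abel,
            show y' - y = -(y - y') by abel, inner_neg_neg]
end
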